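/- The amortized annual payment A = P·r/(1 − (1+r)^{−n}) is strictly increasing in the interest rate r for fixed P > 0 and n ≥ 2; that is, if 0 < r₁ < r₂ then P·r₁/(1 − (1+r₁)^{−n}) < P·r₂/(1 − (1+r₂)^{−n}). -/

import Mathlib

/-- The annuity payment `A(r) = P·r/(1 - (1+r)^{-n})` is strictly increasing
in the interest rate `r` for fixed `P > 0` and `n ≥ 2`. -/
theorem annuity_strict_mono (P : ℝ) (n : ℕ) (r₁ r₂ : ℝ)
    (hP : 0 < P) (hn : 2 ≤ n) (hr₁ : 0 < r₁) (hr : r₁ < r₂) :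
    P * r₁ / (1 - (1 + r₁) ^ (-(n : ℤ))) < P * r₂ / (1 - (1 + r₂) ^ (-(n : ℤ))) := by
  have hr₂ : 0 < r₂ := hr₁.trans hr
  -- rewrite A(r) as P / (annuity factor)
  have key : ∀ r : ℝ, 0 < r → P * r / (1 - (1 + r) ^ (-(n : ℤ))) =
      P / ∑ k ∈ Finset.range n, ((1 + r)⁻¹) ^ (k + 1) := by
    intro r hr
    have h1 : (0:ℝ) < 1 + r := by linarith
    have h1' : (1 + r) ≠ 0 := ne_of_gt h1
    have hy : (1 + r) ^ (-(n : ℤ)) = ((1 + r)⁻¹) ^ n := by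
      rw [zpow_neg, zpow_natCast, inv_pow]
    have hmul : ∀ k : ℕ, r * ((1 + r)⁻¹) ^ (k + 1)
        = ((1 + r)⁻¹) ^ k - ((1 + r)⁻¹) ^ (k + 1) := by
      intro k
      have : ((1 + r)⁻¹) ^ (k + 1) * (1 + r) = ((1 + r)⁻¹) ^ k := by
        rw [pow_succ]
        field_simp
      nlinarith [this]
    have hsum : r * ∑ k ∈ Finset.range n, ((1 + r)⁻¹) ^ (k + 1)
        = 1 - ((1 + r)⁻¹) ^ n := by
      rw [Finset.mul_sum]
      have := Finset.sum_range_sub' (fun k => ((1 + r)⁻¹) ^ k) n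
      simp only [pow_zero] at this
      rw [Finset.sum_congr rfl (fun k _ => hmul k), this]
    have hS : ∑ k ∈ Finset.range n, ((1 + r)⁻¹) ^ (k + 1)
        = (1 - ((1 + r)⁻¹) ^ n) / r := by
      rw [eq_div_iff (ne_of_gt hr), mul_comm, hsum]
    rw [hy, hS, div_div_eq_mul_div]
  rw [key r₁ hr₁, key r₂ hr₂]
  have h1 : (0:ℝ) < 1 + r₁ := by linarith
  have h2 : (0:ℝ) < 1 + r₂ := by linarith
  have hyy : (1 + r₂)⁻¹ < (1 + r₁)⁻¹ := by
    apply inv_strictAnti₀ h1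
    linarith
  have hne : (Finset.range n).Nonempty := by
    refine Finset.nonempty_range_iff.mpr ?_
    omega
  have hlt : ∑ k ∈ Finset.range n, ((1 + r₂)⁻¹) ^ (k + 1)
      < ∑ k ∈ Finset.range n, ((1 + r₁)⁻¹) ^ (k + 1) := by
    apply Finset.sum_lt_sum_of_nonempty hne
    intro k _
    exact pow_lt_pow_left₀ hyy (by positivity) (Nat.succ_ne_zero k)
  have hpos : 0 < ∑ k ∈ Finset.range n, ((1 + r₂)⁻¹) ^ (k + 1) := by
    apply Finset.sum_pos _ hne
    intro k _
    positivity
  exact div_lt_div_of_pos_left hP hpos hlt
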